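/- Let p_1,...,p_n ∈ ℝ^m be reconstructible from distances with not all points equal, and set d_{{i,j}} = ‖p_i − p_j‖², d_max = max of d_{{i,j}} over all pairs. Let q_1,...,q_n ∈ ℝ^m with not all points equal and d'_{{i,j}}, d'_max defined analogously. Then the multisets { d_{{i,j}}/d_max } and { d'_{{i,j}}/d'_max } are equal if and only if there exist a rigid motion (M,T), a scalar λ ≠ 0, and a permutation π of {1,...,n} such that λ(M p_i + T) = q_{π(i)} for all i. -/

import Mathlib

/-- The distribution of squared pairwise distances of an `n`-point configuration in `ℝ^m`. -/
noncomputable def sqDistDistribution {m n : ℕ} (p : Fin n → EuclideanSpace ℝ (Fin m)) :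
    Multiset ℝ :=
  (((Finset.univ : Finset (Sym2 (Fin n))).filter fun z => ¬ z.IsDiag).val).map
    (Sym2.lift ⟨fun i j => dist (p i) (p j) ^ 2, fun _ _ => by simp [dist_comm]⟩)

/-- The maximal squared pairwise distance of a configuration. -/
noncomputable def dmax {m n : ℕ} (p : Fin n → EuclideanSpace ℝ (Fin m)) : ℝ :=
  sSup (Set.range fun ij : Fin n × Fin n => dist (p ij.1) (p ij.2) ^ 2)

/-- Reconstructibility from distances in `ℝ^m`. -/
def ReconstructibleFromDistances {m n : ℕ} (p : Fin n → EuclideanSpace ℝ (Fin m)) : Prop :=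
  ∀ q : Fin n → EuclideanSpace ℝ (Fin m), sqDistDistribution q = sqDistDistribution p →
    ∃ M : Matrix (Fin m) (Fin m) ℝ, M ∈ Matrix.orthogonalGroup (Fin m) ℝ ∧
      ∃ T : EuclideanSpace ℝ (Fin m), ∃ π : Equiv.Perm (Fin n),
        ∀ i, (WithLp.equiv 2 (Fin m → ℝ)).symm (M.mulVec (p i)) + T = q (π i)

/-!
Both sides are invariant under relabelling the points and under similarities: a similarity with
ratio `λ` multiplies every squared distance, and hence `d_max`, by `λ²`, which cancels in the
normalized distribution. Conversely, rescaling `q` by `√(d_max(p) / d_max(q))` produces a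
configuration with the same `d_max` as `p`, hence with the same squared-distance multiset, and
reconstructibility of `p` supplies the rigid motion.
-/

section

variable {m n : ℕ}

lemma norm_toLp_mulVec_of_mem_orthogonalGroup {M : Matrix (Fin m) (Fin m) ℝ}
    (hM : M ∈ Matrix.orthogonalGroup (Fin m) ℝ) (x : EuclideanSpace ℝ (Fin m)) :
    ‖(WithLp.equiv 2 (Fin m → ℝ)).symm (M.mulVec x)‖ = ‖x‖ :=
  (Matrix.toEuclideanCLM (𝕜 := ℝ) M).norm_map_of_mem_unitary
    (Unitary.map_mem Matrix.toEuclideanCLM hM) x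

lemma dist_smul_orthogonal_add {M : Matrix (Fin m) (Fin m) ℝ}
    (hM : M ∈ Matrix.orthogonalGroup (Fin m) ℝ) (T : EuclideanSpace ℝ (Fin m)) (lam : ℝ)
    (x y : EuclideanSpace ℝ (Fin m)) :
    dist (lam • ((WithLp.equiv 2 (Fin m → ℝ)).symm (M.mulVec x) + T))
      (lam • ((WithLp.equiv 2 (Fin m → ℝ)).symm (M.mulVec y) + T)) = |lam| * dist x y := by
  rw [dist_smul₀, Real.norm_eq_abs, dist_add_right, dist_eq_norm, dist_eq_norm,
    ← norm_toLp_mulVec_of_mem_orthogonalGroup hM (x - y)]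
  simp [Matrix.mulVec_sub]

lemma sqDistDistribution_comp_perm (p : Fin n → EuclideanSpace ℝ (Fin m))
    (π : Equiv.Perm (Fin n)) :
    sqDistDistribution (p ∘ π) = sqDistDistribution p := by
  set e := (π : Fin n ↪ Fin n).sym2Map
  have he : (Finset.univ.filter fun z : Sym2 (Fin n) => ¬ z.IsDiag).map e =
      Finset.univ.filter fun z => ¬ z.IsDiag := by
    ext z
    simp only [Finset.mem_map, Finset.mem_filter, Finset.mem_univ, true_and]
    refine ⟨fun ⟨a, ha, hz⟩ => hz ▸ ?_, fun hz => ⟨z.map π.symm, ?_, ?_⟩⟩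
    · simpa [e, Sym2.isDiag_map π.injective] using ha
    · rwa [Sym2.isDiag_map π.symm.injective]
    · simp [e, Sym2.map_map]
  unfold sqDistDistribution
  conv_rhs => rw [← he, Finset.map_val, Multiset.map_map]
  congr 1
  ext z
  induction z using Sym2.ind
  rfl

lemma dmax_comp_perm (p : Fin n → EuclideanSpace ℝ (Fin m)) (π : Equiv.Perm (Fin n)) :
    dmax (p ∘ π) = dmax p := by
  unfold dmax
  conv_rhs => rw [← (π.prodCongr π).surjective.range_comp]
  rfl

lemma sqDistDistribution_eq_map_mul {p q : Fin n → EuclideanSpace ℝ (Fin m)} {c : ℝ}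
    (h : ∀ i j, dist (q i) (q j) ^ 2 = c * dist (p i) (p j) ^ 2) :
    sqDistDistribution q = (sqDistDistribution p).map (c * ·) := by
  unfold sqDistDistribution
  rw [Multiset.map_map]
  refine Multiset.map_congr rfl fun z _ => ?_
  induction z using Sym2.ind with
  | _ i j => simp [h i j]

lemma dmax_eq_mul {p q : Fin n → EuclideanSpace ℝ (Fin m)} {c : ℝ} (hc : 0 ≤ c)
    (h : ∀ i j, dist (q i) (q j) ^ 2 = c * dist (p i) (p j) ^ 2) :
    dmax q = c * dmax p := by
  change ⨆ ij : Fin n × Fin n, _ = c * ⨆ ij : Fin n × Fin n, _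
  simp only [Real.mul_iSup_of_nonneg hc, h]

lemma dmax_pos {p : Fin n → EuclideanSpace ℝ (Fin m)} (hp : ∃ i j, p i ≠ p j) :
    0 < dmax p := by
  obtain ⟨i, j, hij⟩ := hp
  exact (pow_pos (dist_pos.mpr hij) 2).trans_le
    (le_csSup (Set.finite_range _).bddAbove ⟨(i, j), rfl⟩)

noncomputable def normalizedSqDistDistribution (p : Fin n → EuclideanSpace ℝ (Fin m)) :
    Multiset ℝ :=
  (sqDistDistribution p).map (· / dmax p)

lemma normalizedSqDistDistribution_comp_perm (p : Fin n → EuclideanSpace ℝ (Fin m))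
    (π : Equiv.Perm (Fin n)) :
    normalizedSqDistDistribution (p ∘ π) = normalizedSqDistDistribution p := by
  rw [normalizedSqDistDistribution, sqDistDistribution_comp_perm, dmax_comp_perm,
    normalizedSqDistDistribution]

lemma normalizedSqDistDistribution_eq_of_dist_sq_eq_mul {p q : Fin n → EuclideanSpace ℝ (Fin m)}
    {c : ℝ} (hc : 0 < c) (h : ∀ i j, dist (q i) (q j) ^ 2 = c * dist (p i) (p j) ^ 2) :
    normalizedSqDistDistribution q = normalizedSqDistDistribution p := by
  rw [normalizedSqDistDistribution, sqDistDistribution_eq_map_mul h, dmax_eq_mul hc.le h,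
    Multiset.map_map]
  exact Multiset.map_congr rfl fun d _ => mul_div_mul_left d (dmax p) hc.ne'

lemma sqDistDistribution_eq_of_normalizedSqDistDistribution_eq
    {p q : Fin n → EuclideanSpace ℝ (Fin m)}
    (h : normalizedSqDistDistribution p = normalizedSqDistDistribution q)
    (hdmax : dmax p = dmax q) (hp : dmax p ≠ 0) :
    sqDistDistribution p = sqDistDistribution q := by
  rw [normalizedSqDistDistribution, normalizedSqDistDistribution, ← hdmax] at h
  exact Multiset.map_injective (fun _ _ => (div_left_inj' hp).mp) h

lemma sqDistDistribution_sqrt_smul_eq_of_normalizedSqDistDistribution_eq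
    {p q : Fin n → EuclideanSpace ℝ (Fin m)} (hp : 0 < dmax p) (hq : 0 < dmax q)
    (h : normalizedSqDistDistribution p = normalizedSqDistDistribution q) :
    sqDistDistribution (fun i => √(dmax p / dmax q) • q i) = sqDistDistribution p := by
  have hc : 0 < dmax p / dmax q := div_pos hp hq
  have hdist : ∀ i j, dist (√(dmax p / dmax q) • q i) (√(dmax p / dmax q) • q j) ^ 2 =
      dmax p / dmax q * dist (q i) (q j) ^ 2 := fun i j => by
    rw [dist_smul₀, mul_pow, Real.norm_eq_abs, sq_abs, Real.sq_sqrt hc.le]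
  have hdmax : dmax (fun i => √(dmax p / dmax q) • q i) = dmax p := by
    rw [dmax_eq_mul hc.le hdist, div_mul_cancel₀ _ hq.ne']
  exact (sqDistDistribution_eq_of_normalizedSqDistDistribution_eq
    (h.trans (normalizedSqDistDistribution_eq_of_dist_sq_eq_mul hc hdist).symm) hdmax.symm
    hp.ne').symm

end

theorem stmt_18 (m n : ℕ) (p q : Fin n → EuclideanSpace ℝ (Fin m))
    (hrec : ReconstructibleFromDistances p)
    (hp : ∃ i j, p i ≠ p j) (hq : ∃ i j, q i ≠ q j) :
    (sqDistDistribution p).map (fun d => d / dmax p) =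
        (sqDistDistribution q).map (fun d => d / dmax q) ↔
      ∃ M : Matrix (Fin m) (Fin m) ℝ, M ∈ Matrix.orthogonalGroup (Fin m) ℝ ∧
        ∃ T : EuclideanSpace ℝ (Fin m), ∃ lam : ℝ, lam ≠ 0 ∧ ∃ π : Equiv.Perm (Fin n),
          ∀ i, lam • ((WithLp.equiv 2 (Fin m → ℝ)).symm (M.mulVec (p i)) + T) = q (π i) := by
  change normalizedSqDistDistribution p = normalizedSqDistDistribution q ↔ _
  constructor
  · intro h
    set s := √(dmax p / dmax q)
    obtain ⟨M, hM, T, π, hπ⟩ := hrec _ <|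
      sqDistDistribution_sqrt_smul_eq_of_normalizedSqDistDistribution_eq
        (dmax_pos hp) (dmax_pos hq) h
    have hs : s ≠ 0 := Real.sqrt_ne_zero'.mpr (div_pos (dmax_pos hp) (dmax_pos hq))
    refine ⟨M, hM, T, s⁻¹, inv_ne_zero hs, π, fun i => ?_⟩
    rw [hπ i, smul_smul, inv_mul_cancel₀ hs, one_smul]
  · rintro ⟨M, hM, T, lam, hlam, π, hπ⟩
    rw [← normalizedSqDistDistribution_comp_perm q π]
    refine (normalizedSqDistDistribution_eq_of_dist_sq_eq_mul
      (c := lam ^ 2) (by positivity) fun i j => ?_).symm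
    simp only [Function.comp_apply, ← hπ, dist_smul_orthogonal_add hM, mul_pow, sq_abs]
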